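/- arXiv:2206.01143 — 3 statements merged into one kernel-verified Lean document; each statement's English description precedes it below -/
import Mathlib

section
/- Let k be a field, let m, p ≥ 1 and n = m + p, and assume (n−1)! ≠ 0 in k. Let f : Fin m → Polynomial k be linearly independent over k with each f i of degree < n, and let s ∈ k. Then the Wronskian Wr(f) evaluated at s is zero if and only if the k-span of {f 0, …, f (m−1)} intersects E_p(s) nontrivially, i.e. span{f i} ⊓ E_p(s) ≠ ⊥. -/
/-!
Evaluated at `s`, the Wronskian matrix is the matrix of `c ↦ (g⁽ⁱ⁾(s))_{i<m}` with
`g = ∑ c j • f j`, so `Wr f` vanishes at `s` iff some nonzero combination `g` vanishes to order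
`m` at `s`. As `g⁽ⁱ⁾(s) = i! · (taylor s g).coeff i` and `i!` is invertible for `i < m`, this
means that the expansion of `g` in powers of `X - C s` starts in degree `m`; since
`deg g < m + p`, it also stops below `m + p`, i.e. `g ∈ E_p(s)`.
-/

open Polynomial

/-- The Wronskian of a family `f : Fin m → Polynomial k`. -/
noncomputable def Wr {k : Type*} [Field k] {m : ℕ} (f : Fin m → Polynomial k) : Polynomial k :=
  Matrix.det (Matrix.of fun i j : Fin m => Polynomial.derivative^[(i : ℕ)] (f j))

/-- The plane `E_p(s)`: the span of `(X - C s)^j` for `m ≤ j ≤ m + p - 1`. -/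
noncomputable def Eplane {k : Type*} [Field k] (m p : ℕ) (s : k) : Submodule k (Polynomial k) :=
  Submodule.span k
    ((fun j : ℕ => (Polynomial.X - Polynomial.C s) ^ j) '' {j | m ≤ j ∧ j ≤ m + p - 1})

open Matrix

open scoped Nat

namespace Polynomial

theorem eval_iterate_derivative_eq_factorial_mul_taylor_coeff {R : Type*} [CommSemiring R]
    (g : R[X]) (s : R) (i : ℕ) :
    eval s (derivative^[i] g) = i ! * (taylor s g).coeff i := by
  rw [← factorial_smul_hasseDeriv, taylor_coeff, LinearMap.smul_apply, nsmul_eq_mul, eval_mul,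
    eval_natCast]

end Polynomial

section Eplane

variable {k : Type*} [Field k] {m p : ℕ} {s : k} {g : k[X]}

theorem iterate_derivative_eval_eq_zero_of_mem_Eplane (hg : g ∈ Eplane m p s) {i : ℕ}
    (hi : i < m) : eval s (derivative^[i] g) = 0 := by
  induction hg using Submodule.span_induction with
  | mem x hx =>
    obtain ⟨j, ⟨hmj, -⟩, rfl⟩ := hx
    simp [iterate_derivative_X_sub_pow, zero_pow (Nat.sub_ne_zero_of_lt (hi.trans_le hmj))]
  | zero => simp
  | add x y _ _ hx hy => simp [hx, hy]
  | smul a x _ hx => simp [hx]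

theorem mem_Eplane_of_iterate_derivative_eval_eq_zero (hdeg : g.degree < ↑(m + p))
    (hfac : ∀ i < m, (i ! : k) ≠ 0) (hg : ∀ i < m, eval s (derivative^[i] g) = 0) :
    g ∈ Eplane m p s := by
  have hcoeff : ∀ i < m, (taylor s g).coeff i = 0 := fun i hi => by
    simpa [eval_iterate_derivative_eq_factorial_mul_taylor_coeff, hfac i hi] using hg i hi
  rw [← sum_taylor_eq g s]
  refine Submodule.sum_mem _ fun j hj => ?_
  have hmj : m ≤ j := by
    by_contra! hjm
    exact mem_support_iff.1 hj (hcoeff j hjm)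
  have hjp : j < m + p := by
    have := le_degree_of_mem_supp j hj
    rw [degree_taylor] at this
    exact_mod_cast this.trans_lt hdeg
  dsimp only
  rw [← smul_eq_C_mul]
  exact Submodule.smul_mem _ _ (Submodule.subset_span ⟨j, ⟨hmj, by omega⟩, rfl⟩)

theorem mem_Eplane_iff (hdeg : g.degree < ↑(m + p)) (hfac : ∀ i < m, (i ! : k) ≠ 0) :
    g ∈ Eplane m p s ↔ ∀ i < m, eval s (derivative^[i] g) = 0 :=
  ⟨fun hg _ => iterate_derivative_eval_eq_zero_of_mem_Eplane hg,
    mem_Eplane_of_iterate_derivative_eval_eq_zero hdeg hfac⟩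

end Eplane

theorem eval_Wr {k : Type*} [Field k] {m : ℕ} (f : Fin m → k[X]) (s : k) :
    eval s (Wr f) = (of fun i j : Fin m => eval s (derivative^[i] (f j))).det := by
  rw [Wr, ← coe_evalRingHom, RingHom.map_det]
  rfl

theorem mulVec_of_eval_iterate_derivative {R : Type*} [CommSemiring R] {m : ℕ}
    (f : Fin m → R[X]) (s : R) (c : Fin m → R) :
    (of fun i j : Fin m => eval s (derivative^[i] (f j))) *ᵥ c =
      fun i : Fin m => eval s (derivative^[i] (∑ j, c j • f j)) := by
  ext i
  simp [mulVec, dotProduct, iterate_derivative_sum, iterate_derivative_smul, eval_finsetSum,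
    mul_comm]

theorem LinearIndependent.span_range_inf_ne_bot_iff {ι R M : Type*} [Fintype ι] [Ring R]
    [AddCommGroup M] [Module R M] {f : ι → M} (hf : LinearIndependent R f) (W : Submodule R M) :
    Submodule.span R (Set.range f) ⊓ W ≠ ⊥ ↔ ∃ c : ι → R, c ≠ 0 ∧ ∑ j, c j • f j ∈ W := by
  rw [Submodule.ne_bot_iff]
  constructor
  · rintro ⟨g, hg, hg0⟩
    obtain ⟨hgf, hgW⟩ := Submodule.mem_inf.1 hg
    obtain ⟨c, rfl⟩ := (Submodule.mem_span_range_iff_exists_fun R).1 hgf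
    exact ⟨c, fun hc => hg0 (by simp [hc]), hgW⟩
  · rintro ⟨c, hc0, hcW⟩
    refine ⟨∑ j, c j • f j, Submodule.mem_inf.2 ⟨?_, hcW⟩, fun h0 => hc0 ?_⟩
    · exact Submodule.sum_mem _ fun j _ => Submodule.smul_mem _ _ (Submodule.subset_span ⟨j, rfl⟩)
    · exact funext (Fintype.linearIndependent_iff.1 hf c h0)

theorem wronskian_eval_zero_iff_meets_Eplane_general {k : Type*} [Field k] (m p n : ℕ)
    (hn : n = m + p)
    (hfac : ((Nat.factorial (n - 1) : k) ≠ 0))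
    (f : Fin m → Polynomial k) (hli : LinearIndependent k f)
    (hf : ∀ i, (f i).degree < n) (s : k) :
    Polynomial.eval s (Wr f) = 0 ↔
      Submodule.span k (Set.range f) ⊓ Eplane m p s ≠ ⊥ := by
  subst hn
  have hfac_lt : ∀ i < m, (i ! : k) ≠ 0 := fun i hi =>
    ne_zero_of_dvd_ne_zero hfac (Nat.cast_dvd_cast (Nat.factorial_dvd_factorial (by omega)))
  have hdeg : ∀ c : Fin m → k, (∑ j, c j • f j).degree < ↑(m + p) := fun c =>
    mem_degreeLT.1 <| Submodule.sum_mem _ fun j _ =>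
      Submodule.smul_mem _ _ (mem_degreeLT.2 (hf j))
  rw [eval_Wr, ← exists_mulVec_eq_zero_iff, hli.span_range_inf_ne_bot_iff]
  refine exists_congr fun c => and_congr_right fun _ => ?_
  rw [mulVec_of_eval_iterate_derivative, mem_Eplane_iff (hdeg c) hfac_lt, funext_iff,
    Fin.forall_iff]
  rfl

theorem wronskian_eval_zero_iff_meets_Eplane {k : Type*} [Field k] (m p n : ℕ)
    (hm : 1 ≤ m) (hp : 1 ≤ p) (hn : n = m + p)
    (hfac : ((Nat.factorial (n - 1) : k) ≠ 0))
    (f : Fin m → Polynomial k) (hli : LinearIndependent k f)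
    (hf : ∀ i, (f i).degree < n) (s : k) :
    Polynomial.eval s (Wr f) = 0 ↔
      Submodule.span k (Set.range f) ⊓ Eplane m p s ≠ ⊥ :=
  wronskian_eval_zero_iff_meets_Eplane_general m p n hn hfac f hli hf s
end

section
/- Let k be a field and m, p ≥ 1. Let f : Fin m → Polynomial k be of the form f γ = X^(p+γ) + g γ where each g γ has degree < p. Then natDegree (Wr f) ≤ m*p and the coefficient of X^(m*p) in Wr(f) equals ((∏_{r=1}^{m−1} r!) : ℕ) cast into k; in particular this coefficient does not depend on the perturbations g γ. -/
open Polynomial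

/-!
The entry `derivative^[i] (f j)` has degree at most `(p + j) - i`, with top coefficient the falling
factorial `(p + j)(p + j - 1)⋯(p + j - i + 1)`. Hence every term of the Leibniz expansion of the
Wronskian has degree at most `∑ (p + j) - ∑ i = m p`, and the coefficient of `X ^ (m p)` is the
determinant of the matrix of falling factorials, which only sees the leading monomials. Its
`(i, j)` entry is the monic degree-`i` polynomial `descPochhammer i` evaluated at `p + j`, so it
equals the Vandermonde determinant of `p, p + 1, …, p + m - 1`, i.e. the superfactorial
`sf (m - 1)`.
-/

namespace Polynomial

variable {R : Type*} [CommRing R]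

theorem coeff_prod_sum_of_natDegree_le {ι : Type*} (s : Finset ι) (f : ι → R[X]) (d : ι → ℕ)
    (h : ∀ i ∈ s, (f i).natDegree ≤ d i) :
    (∏ i ∈ s, f i).coeff (∑ i ∈ s, d i) = ∏ i ∈ s, (f i).coeff (d i) := by
  induction s using Finset.cons_induction with
  | empty => simp
  | cons a s ha ih =>
    rw [Finset.prod_cons, Finset.sum_cons, Finset.prod_cons,
      coeff_mul_add_eq_of_natDegree_le (h a (Finset.mem_cons_self a s))
        ((natDegree_prod_le _ _).trans (Finset.sum_le_sum fun i hi =>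
          h i (Finset.mem_cons_of_mem hi))),
      ih fun i hi => h i (Finset.mem_cons_of_mem hi)]

section CoeffVanishing

variable {q : R[X]} {a b : ℕ}

theorem natDegree_le_sub_of_coeff_eq_zero (hq : ∀ k, a < k + b → q.coeff k = 0) :
    q.natDegree ≤ a - b :=
  natDegree_le_iff_coeff_eq_zero.2 fun k hk => hq k (by omega)

theorem eq_zero_of_coeff_eq_zero_of_lt (hq : ∀ k, a < k + b → q.coeff k = 0) (hab : a < b) :
    q = 0 :=
  ext fun k => (hq k (by omega)).trans (coeff_zero k).symm

end CoeffVanishing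

section Product

variable {ι : Type*} (s : Finset ι) (q : ι → R[X]) (a b : ι → ℕ)

theorem natDegree_prod_le_sum_sub (hq : ∀ i ∈ s, ∀ k, a i < k + b i → (q i).coeff k = 0) :
    (∏ i ∈ s, q i).natDegree ≤ ∑ i ∈ s, a i - ∑ i ∈ s, b i := by
  by_cases hba : ∀ i ∈ s, b i ≤ a i
  · rw [← Finset.sum_tsub_distrib s hba]
    exact (natDegree_prod_le _ _).trans
      (Finset.sum_le_sum fun i hi => natDegree_le_sub_of_coeff_eq_zero (hq i hi))
  · push Not at hba
    obtain ⟨i, hi, hab⟩ := hba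
    rw [Finset.prod_eq_zero hi (eq_zero_of_coeff_eq_zero_of_lt (hq i hi) hab), natDegree_zero]
    exact Nat.zero_le _

theorem coeff_prod_sum_sub (hq : ∀ i ∈ s, ∀ k, a i < k + b i → (q i).coeff k = 0) :
    (∏ i ∈ s, q i).coeff (∑ i ∈ s, a i - ∑ i ∈ s, b i) = ∏ i ∈ s, (q i).coeff (a i - b i) := by
  by_cases hba : ∀ i ∈ s, b i ≤ a i
  · rw [← Finset.sum_tsub_distrib s hba]
    exact coeff_prod_sum_of_natDegree_le s q _ fun i hi =>
      natDegree_le_sub_of_coeff_eq_zero (hq i hi)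
  · push Not at hba
    obtain ⟨i, hi, hab⟩ := hba
    rw [Finset.prod_eq_zero hi (eq_zero_of_coeff_eq_zero_of_lt (hq i hi) hab), coeff_zero,
      Finset.prod_eq_zero hi (hq i hi _ (by omega))]

end Product

section Determinant

variable {n : Type*} [Fintype n] [DecidableEq n] (M : Matrix n n R[X]) (d e : n → ℕ)

theorem natDegree_det_le_of_coeff_eq_zero
    (hM : ∀ i j k, d j < k + e i → (M i j).coeff k = 0) :
    M.det.natDegree ≤ ∑ j, d j - ∑ i, e i := by
  rw [Matrix.det_apply]
  refine natDegree_sum_le_of_forall_le _ _ fun σ _ => (natDegree_smul_le _ _).trans ?_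
  rw [← Equiv.sum_comp σ e]
  exact natDegree_prod_le_sum_sub _ _ _ _ fun j _ k => hM (σ j) j k

theorem coeff_det_of_coeff_eq_zero (hM : ∀ i j k, d j < k + e i → (M i j).coeff k = 0) :
    M.det.coeff (∑ j, d j - ∑ i, e i) =
      (Matrix.of fun i j => (M i j).coeff (d j - e i)).det := by
  simp only [Matrix.det_apply, finsetSum_coeff, coeff_smul]
  refine Finset.sum_congr rfl fun σ _ => ?_
  rw [← Equiv.sum_comp σ e, coeff_prod_sum_sub _ _ _ _ fun j _ k => hM (σ j) j k]
  rfl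

end Determinant

theorem coeff_iterate_derivative_eq_zero_of_natDegree_lt {f : R[X]} {i k : ℕ}
    (h : f.natDegree < k + i) : (derivative^[i] f).coeff k = 0 := by
  rw [coeff_iterate_derivative, coeff_eq_zero_of_natDegree_lt h, smul_zero]

theorem coeff_iterate_derivative_natDegree_sub (f : R[X]) (i : ℕ) :
    (derivative^[i] f).coeff (f.natDegree - i) = f.natDegree.descFactorial i • f.leadingCoeff := by
  rcases le_or_gt i f.natDegree with h | h
  · rw [coeff_iterate_derivative, Nat.sub_add_cancel h, leadingCoeff]
  · rw [Nat.descFactorial_eq_zero_iff_lt.2 h, zero_smul,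
      coeff_iterate_derivative_eq_zero_of_natDegree_lt (by omega)]

end Polynomial

theorem Matrix.det_descFactorial_add (R : Type*) [CommRing R] [IsDomain R] (a m : ℕ) :
    (Matrix.of fun i j : Fin m => ((a + j).descFactorial i : R)).det = (m - 1).superFactorial := by
  cases m with
  | zero => simp
  | succ n =>
    have hrows : (Matrix.of fun i j : Fin (n + 1) => ((a + j).descFactorial i : R)).transpose =
        Matrix.of fun i j : Fin (n + 1) => (descPochhammer R j).eval ((i : R) + a) := by
      ext i j
      simp only [Matrix.transpose_apply, Matrix.of_apply, ← descPochhammer_eval_eq_descFactorial]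
      push_cast
      ring_nf
    rw [← Matrix.det_transpose, hrows,
      ← det_eval_matrixOfPolynomials_eq_det_vandermonde _ _ (fun i => descPochhammer_natDegree R i)
        (fun i => monic_descPochhammer R i),
      Matrix.det_vandermonde_add, Matrix.det_vandermonde_id_eq_superFactorial, Nat.add_sub_cancel]

theorem wronskian_leading_coeff_of_perturbed_monomials_general {k : Type*} [Field k] (m p : ℕ)
    (f g : Fin m → Polynomial k)
    (hf : ∀ γ : Fin m, f γ = Polynomial.X ^ (p + (γ : ℕ)) + g γ)
    (hg : ∀ γ : Fin m, (g γ).degree < p) :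
    (Wr f).natDegree ≤ m * p ∧
      (Wr f).coeff (m * p) = ((∏ r ∈ Finset.Icc 1 (m - 1), Nat.factorial r : ℕ) : k) := by
  have hg' (j : Fin m) : (g j).degree < ↑(p + (j : ℕ)) :=
    (hg j).trans_le (by exact_mod_cast le_self_add)
  have hmonic (j : Fin m) : (f j).Monic := hf j ▸ monic_X_pow_add (hg' j)
  have hdeg (j : Fin m) : (f j).natDegree = p + j := by
    rw [hf j, natDegree_add_eq_left_of_degree_lt (by rw [degree_X_pow]; exact hg' j),
      natDegree_X_pow]
  have hvanish (i j : Fin m) (n : ℕ) (h : p + (j : ℕ) < n + i) :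
      (derivative^[i] (f j)).coeff n = 0 :=
    coeff_iterate_derivative_eq_zero_of_natDegree_lt (hdeg j ▸ h)
  have htop (i j : Fin m) :
      (derivative^[i] (f j)).coeff (p + j - i) = ((p + j).descFactorial i : k) := by
    rw [← hdeg j, coeff_iterate_derivative_natDegree_sub, (hmonic j).leadingCoeff, nsmul_one]
  have hsum : ∑ j : Fin m, (p + (j : ℕ)) - ∑ i : Fin m, (i : ℕ) = m * p := by
    simp [Finset.sum_add_distrib]
  refine ⟨hsum ▸ natDegree_det_le_of_coeff_eq_zero _ _ _ hvanish, ?_⟩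
  rw [Wr, ← hsum, coeff_det_of_coeff_eq_zero (Matrix.of _) _ _ hvanish]
  simp only [Matrix.of_apply, htop, Matrix.det_descFactorial_add, Nat.prod_Icc_factorial]

theorem wronskian_leading_coeff_of_perturbed_monomials {k : Type*} [Field k] (m p : ℕ)
    (hm : 1 ≤ m) (hp : 1 ≤ p)
    (f g : Fin m → Polynomial k)
    (hf : ∀ γ : Fin m, f γ = Polynomial.X ^ (p + (γ : ℕ)) + g γ)
    (hg : ∀ γ : Fin m, (g γ).degree < p) :
    (Wr f).natDegree ≤ m * p ∧
      (Wr f).coeff (m * p) = ((∏ r ∈ Finset.Icc 1 (m - 1), Nat.factorial r : ℕ) : k) :=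
  wronskian_leading_coeff_of_perturbed_monomials_general m p f g hf hg
end

section
/- Let k be a field and n ≥ 1 with (n−1)! ≠ 0 in k, and let s ∈ k. Then the family (γ_j(s))_{j ∈ Fin n} is a basis of the k-vector space of polynomials of degree < n (Polynomial.degreeLT k n); in particular it is linearly independent over k. -/
open Polynomial

/-- The `j`-th derivative of the rational normal curve `γ(s) = ∑_{r<n} s^r X^r`. -/
noncomputable def gammaDeriv {k : Type*} [Field k] (n : ℕ) (s : k) (j : ℕ) : Polynomial k :=
  ∑ r ∈ Finset.range n, Polynomial.C ((Nat.descFactorial r j : k) * s ^ (r - j)) * Polynomial.X ^ r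

/-
The coefficient matrix `(j, r) ↦ r.descFactorial j * s ^ (r - j)` of the family `γ_j(s)` is upper
triangular, since `r.descFactorial j = 0` for `r < j`, with diagonal entries `j !`. These divide
`(n - 1)!`, so the matrix is invertible, and a family in `degreeLT k n` whose coefficient matrix is
invertible is a basis.
-/

theorem Polynomial.exists_basis_degreeLT_of_isUnit_coeff {K : Type*} [Field K] {n : ℕ}
    {v : Fin n → K[X]} (hv : ∀ i, v i ∈ degreeLT K n)
    (hA : IsUnit (Matrix.of fun i j : Fin n => (v i).coeff j)) :
    ∃ b : Module.Basis (Fin n) K (degreeLT K n), ∀ i, (b i : K[X]) = v i := by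
  let w : Fin n → degreeLT K n := fun i => ⟨v i, hv i⟩
  have hw : LinearIndependent K w :=
    LinearIndependent.of_comp (degreeLTEquiv K n).toLinearMap
      (Matrix.linearIndependent_rows_iff_isUnit.2 hA)
  have hcard : Fintype.card (Fin n) = Module.finrank K (degreeLT K n) := by
    simp [(degreeLTEquiv K n).finrank_eq]
  have := LinearEquiv.finiteDimensional (degreeLTEquiv K n).symm
  exact ⟨basisOfLinearIndependentOfCardEqFinrank' w hw hcard, fun i => by simp [w]⟩

section gammaDeriv

variable {k : Type*} [Field k] (n : ℕ) (s : k)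

theorem gammaDeriv_mem_degreeLT (j : ℕ) : gammaDeriv n s j ∈ degreeLT k n :=
  Submodule.sum_mem _ fun r hr => mem_degreeLT.2 <|
    (degree_C_mul_X_pow_le r _).trans_lt (by exact_mod_cast Finset.mem_range.1 hr)

theorem coeff_gammaDeriv (j : ℕ) (r : Fin n) :
    (gammaDeriv n s j).coeff r = (r.val.descFactorial j : k) * s ^ (r.val - j) := by
  rw [gammaDeriv, finsetSum_coeff, Finset.sum_eq_single_of_mem _ (Finset.mem_range.2 r.isLt)]
  · rw [coeff_C_mul_X_pow, if_pos rfl]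
  · intro b _ hb
    rw [coeff_C_mul_X_pow, if_neg (Ne.symm hb)]

theorem isUpperTriangular_gammaDeriv_coeff :
    (Matrix.of fun j r : Fin n => (gammaDeriv n s j).coeff r).IsUpperTriangular := by
  intro j r hrj
  simp [coeff_gammaDeriv, Nat.descFactorial_eq_zero_iff_lt.2 (show r.val < j.val from hrj)]

theorem isUnit_gammaDeriv_coeff (hfac : ((n - 1).factorial : k) ≠ 0) :
    IsUnit (Matrix.of fun j r : Fin n => (gammaDeriv n s j).coeff r) := by
  rw [Matrix.isUnit_iff_isUnit_det,
    Matrix.det_of_isUpperTriangular (isUpperTriangular_gammaDeriv_coeff n s), isUnit_iff_ne_zero,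
    Finset.prod_ne_zero_iff]
  intro j _
  simpa [coeff_gammaDeriv, Nat.descFactorial_self] using ne_zero_of_dvd_ne_zero hfac
    (Nat.cast_dvd_cast (Nat.factorial_dvd_factorial (Nat.le_sub_one_of_lt j.isLt)))

end gammaDeriv

theorem gammaDeriv_basis_general {k : Type*} [Field k] (n : ℕ)
    (hfac : ((Nat.factorial (n - 1) : k) ≠ 0)) (s : k) :
    (∃ b : Module.Basis (Fin n) k (Polynomial.degreeLT k n),
        ∀ j : Fin n, (b j : Polynomial k) = gammaDeriv n s (j : ℕ)) ∧
      LinearIndependent k (fun j : Fin n => gammaDeriv (k := k) n s (j : ℕ)) := by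
  obtain ⟨b, hb⟩ := exists_basis_degreeLT_of_isUnit_coeff
    (fun j : Fin n => gammaDeriv_mem_degreeLT n s j) (isUnit_gammaDeriv_coeff n s hfac)
  refine ⟨⟨b, hb⟩, ?_⟩
  have := b.linearIndependent.map' (degreeLT k n).subtype (Submodule.ker_subtype _)
  simpa [Function.comp_def, hb] using this

theorem gammaDeriv_basis {k : Type*} [Field k] (n : ℕ) (hn : 1 ≤ n)
    (hfac : ((Nat.factorial (n - 1) : k) ≠ 0)) (s : k) :
    (∃ b : Module.Basis (Fin n) k (Polynomial.degreeLT k n),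
        ∀ j : Fin n, (b j : Polynomial k) = gammaDeriv n s (j : ℕ)) ∧
      LinearIndependent k (fun j : Fin n => gammaDeriv (k := k) n s (j : ℕ)) :=
  gammaDeriv_basis_general n hfac s
end
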